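/- arXiv:2012.12747 — 2 statements merged into one kernel-verified Lean document; each statement's English description precedes it below -/
import Mathlib

section
/- For any x ∈ ℝ^n, η > 0, γ > 0, 0 < h_0 ≤ η/4, and locally integrable f, g on ℝ^n, it holds that ∬_{|x-y|+|x-z|>η/4} h_0^γ (|x-y|+|x-z|)^{-(2n+γ)} |f(y)||g(z)| dy dz ≤ C h_0^γ η^{-γ} 𝓜(f,g)(x), where C depends only on n and γ, and 𝓜 is the bilinear Hardy–Littlewood maximal operator. -/
open MeasureTheory Filter Set ENNReal
open scoped Topology

noncomputable section

/-- Euclidean space `ℝ^n`. -/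
abbrev En (n : ℕ) := EuclideanSpace ℝ (Fin n)

/-- The cube in `ℝ^n` centered at `c` with side length `2r`. -/
def cube {n : ℕ} (c : En n) (r : ℝ) : Set (En n) := {y | ∀ i, |y i - c i| ≤ r}

/-- The bilinear Hardy–Littlewood maximal operator
`𝓜(f,g)(x) = sup_{Q ∋ x} (|Q|⁻¹∫_Q |f|)(|Q|⁻¹∫_Q |g|)`, valued in `ℝ≥0∞`. -/
def biMax {n : ℕ} (f g : En n → ℝ) (x : En n) : ℝ≥0∞ :=
  ⨆ (c : En n) (r : ℝ) (_ : 0 < r) (_ : x ∈ cube c r),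
    ((∫⁻ y in cube c r, ENNReal.ofReal |f y|) / volume (cube c r)) *
    ((∫⁻ z in cube c r, ENNReal.ofReal |g z|) / volume (cube c r))


/-! On the dyadic annulus `ρ ≤ |x-y|+|x-z| < 2ρ` with `ρ = 2^j η/4` the kernel is at most
`ρ^{-(2n+γ)}`, and the annulus lies in `Q × Q` for the cube `Q` of side `4ρ` centred at `x`, whose
contribution is at most `|Q|² 𝓜(f,g)(x) = (4ρ)^{2n} 𝓜(f,g)(x)`. Each annulus thus contributes
`16ⁿ h₀^γ ρ^{-γ} 𝓜(f,g)(x)`, and these terms form a geometric series of ratio `2^{-γ} < 1`. -/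

lemma cube_eq_preimage_pi {n : ℕ} (c : En n) (r : ℝ) :
    cube c r = (MeasurableEquiv.toLp 2 (Fin n → ℝ)).symm ⁻¹'
      univ.pi fun i => Icc (c i - r) (c i + r) := by
  ext y
  simp only [cube, mem_ofPred_eq, mem_preimage, mem_univ_pi, mem_Icc, abs_le,
    MeasurableEquiv.coe_toLp_symm]
  exact forall_congr' fun i => by constructor <;> intro h <;> constructor <;> linarith [h.1, h.2]

lemma volume_cube {n : ℕ} (c : En n) (r : ℝ) :
    volume (cube c r) = ENNReal.ofReal (2 * r) ^ n := by
  rw [cube_eq_preimage_pi, (EuclideanSpace.volume_preserving_symm_measurableEquiv_toLp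
    (Fin n)).measure_preimage (MeasurableSet.univ_pi fun _ => measurableSet_Icc).nullMeasurableSet,
    volume_pi_pi]
  simp only [Real.volume_Icc, add_sub_sub_cancel, ← two_mul, Finset.prod_const, Finset.card_univ,
    Fintype.card_fin]

lemma mem_cube_of_norm_sub_le {n : ℕ} {c y : En n} {r : ℝ} (h : ‖c - y‖ ≤ r) : y ∈ cube c r :=
  fun i => by
    simpa [abs_sub_comm, Real.norm_eq_abs] using (PiLp.norm_apply_le (c - y) i).trans h

lemma setLIntegral_cube_prod_le_biMax {n : ℕ} {f g : En n → ℝ} (hf : AEMeasurable f)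
    (hg : AEMeasurable g) {x c : En n} {r : ℝ} (hr : 0 < r) (hx : x ∈ cube c r) :
    ∫⁻ q in cube c r ×ˢ cube c r, ENNReal.ofReal |f q.1| * ENNReal.ofReal |g q.2| ≤
      volume (cube c r) ^ 2 * biMax f g x := by
  have hv0 : volume (cube c r) ≠ 0 := by
    rw [volume_cube c r]; exact pow_ne_zero _ (ENNReal.ofReal_pos.2 (by linarith)).ne'
  have hvt : volume (cube c r) ≠ ⊤ := by
    rw [volume_cube c r]; exact ENNReal.pow_ne_top ENNReal.ofReal_ne_top
  set v := volume (cube c r)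
  have h_avg : (∫⁻ y in cube c r, ENNReal.ofReal |f y|) / v *
      ((∫⁻ z in cube c r, ENNReal.ofReal |g z|) / v) ≤ biMax f g x :=
    le_iSup_of_le c <| le_iSup_of_le r <| le_iSup_of_le hr <| le_iSup_of_le hx le_rfl
  rw [Measure.volume_eq_prod, ← Measure.prod_restrict,
    lintegral_prod_mul (hf.restrict.abs.ennreal_ofReal) (hg.restrict.abs.ennreal_ofReal)]
  calc (∫⁻ y in cube c r, ENNReal.ofReal |f y|) * ∫⁻ z in cube c r, ENNReal.ofReal |g z|
      = v ^ 2 * ((∫⁻ y in cube c r, ENNReal.ofReal |f y|) / v *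
          ((∫⁻ z in cube c r, ENNReal.ofReal |g z|) / v)) := by
        rw [sq, mul_mul_mul_comm, ENNReal.mul_div_cancel hv0 hvt, ENNReal.mul_div_cancel hv0 hvt]
    _ ≤ v ^ 2 * biMax f g x := by gcongr

lemma Ici_subset_iUnion_Ico_mul_pow {a b : ℝ} (ha : 0 < a) (hb : 1 < b) :
    Ici a ⊆ ⋃ j : ℕ, Ico (a * b ^ j) (b * (a * b ^ j)) := by
  intro t ht
  obtain ⟨j, hj, hj'⟩ := exists_nat_pow_near ((one_le_div ha).2 ht) hb
  refine mem_iUnion.2 ⟨j, ?_, ?_⟩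
  · linarith [(le_div_iff₀ ha).1 hj]
  · exact ((div_lt_iff₀ ha).1 hj').trans_eq (by ring)

lemma hasSum_mul_pow_rpow_neg {a b γ : ℝ} (ha : 0 ≤ a) (hb : 1 < b) (hγ : 0 < γ) :
    HasSum (fun j : ℕ => (a * b ^ j) ^ (-γ)) (a ^ (-γ) * (1 - b ^ (-γ))⁻¹) := by
  have hb0 : 0 ≤ b := by linarith
  have h_term (j : ℕ) : (a * b ^ j) ^ (-γ) = a ^ (-γ) * (b ^ (-γ)) ^ j := by
    rw [Real.mul_rpow ha (pow_nonneg hb0 j), ← Real.rpow_natCast, ← Real.rpow_mul hb0,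
      mul_comm (j : ℝ), Real.rpow_mul hb0, Real.rpow_natCast]
  simp only [h_term]
  exact (hasSum_geometric_of_lt_one (Real.rpow_nonneg hb0 _)
    (Real.rpow_lt_one_of_one_lt_of_neg hb (neg_neg_of_pos hγ))).mul_left _

lemma setLIntegral_annulus_le {n : ℕ} {f g : En n → ℝ} (hf : AEMeasurable f)
    (hg : AEMeasurable g) (x : En n) {K γ ρ : ℝ} (hK : 0 ≤ K) (hγ : 0 ≤ 2 * (n : ℝ) + γ)
    (hρ : 0 < ρ) :
    ∫⁻ q in {q : En n × En n | ‖x - q.1‖ + ‖x - q.2‖ ∈ Ico ρ (2 * ρ)},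
        ENNReal.ofReal (K * (‖x - q.1‖ + ‖x - q.2‖) ^ (-(2 * (n : ℝ) + γ)) * |f q.1| * |g q.2|) ≤
      ENNReal.ofReal (K * 16 ^ n * ρ ^ (-γ)) * biMax f g x := by
  set s : En n × En n → ℝ := fun q => ‖x - q.1‖ + ‖x - q.2‖
  set Q := cube x (2 * ρ)
  have hs : Continuous s := by fun_prop
  have hKρ : 0 ≤ K * ρ ^ (-(2 * (n : ℝ) + γ)) := by positivity
  have h_kernel : ∀ q ∈ {q | s q ∈ Ico ρ (2 * ρ)},
      ENNReal.ofReal (K * s q ^ (-(2 * (n : ℝ) + γ)) * |f q.1| * |g q.2|) ≤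
        ENNReal.ofReal (K * ρ ^ (-(2 * (n : ℝ) + γ))) *
          (ENNReal.ofReal |f q.1| * ENNReal.ofReal |g q.2|) := by
    intro q hq
    rw [← ENNReal.ofReal_mul (abs_nonneg _), ← ENNReal.ofReal_mul hKρ, ← mul_assoc]
    gcongr ENNReal.ofReal (K * ?_ * _ * _)
    exact Real.rpow_le_rpow_of_nonpos hρ hq.1 (by linarith)
  have h_sub : {q | s q ∈ Ico ρ (2 * ρ)} ⊆ Q ×ˢ Q := fun q hq =>
    ⟨mem_cube_of_norm_sub_le (by linarith [hq.2, norm_nonneg (x - q.2)]),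
      mem_cube_of_norm_sub_le (by linarith [hq.2, norm_nonneg (x - q.1)])⟩
  have h_vol : ρ ^ (-(2 * (n : ℝ) + γ)) * ((2 * (2 * ρ)) ^ n) ^ 2 = 16 ^ n * ρ ^ (-γ) := by
    rw [show ((2 * (2 * ρ)) ^ n) ^ 2 = 16 ^ n * ρ ^ (2 * (n : ℝ)) by
      rw [show 2 * (n : ℝ) = ((2 * n : ℕ) : ℝ) by push_cast; ring, Real.rpow_natCast, ← pow_mul,
        mul_comm n 2, pow_mul, show (2 * (2 * ρ)) ^ 2 = 16 * ρ ^ 2 by ring, mul_pow, ← pow_mul],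
      mul_left_comm, ← Real.rpow_add hρ]
    ring_nf
  calc _ ≤ ∫⁻ q in {q | s q ∈ Ico ρ (2 * ρ)}, ENNReal.ofReal (K * ρ ^ (-(2 * (n : ℝ) + γ))) *
          (ENNReal.ofReal |f q.1| * ENNReal.ofReal |g q.2|) :=
        setLIntegral_mono' (hs.measurable measurableSet_Ico) h_kernel
    _ ≤ ∫⁻ q in Q ×ˢ Q, ENNReal.ofReal (K * ρ ^ (-(2 * (n : ℝ) + γ))) *
          (ENNReal.ofReal |f q.1| * ENNReal.ofReal |g q.2|) := lintegral_mono_set h_sub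
    _ = ENNReal.ofReal (K * ρ ^ (-(2 * (n : ℝ) + γ))) *
          ∫⁻ q in Q ×ˢ Q, ENNReal.ofReal |f q.1| * ENNReal.ofReal |g q.2| :=
        lintegral_const_mul' _ _ ENNReal.ofReal_ne_top
    _ ≤ ENNReal.ofReal (K * ρ ^ (-(2 * (n : ℝ) + γ))) * (volume Q ^ 2 * biMax f g x) := by
        gcongr
        exact setLIntegral_cube_prod_le_biMax hf hg (by linarith) (mem_cube_of_norm_sub_le
          (by simpa using (mul_pos two_pos hρ).le))
    _ = ENNReal.ofReal (K * 16 ^ n * ρ ^ (-γ)) * biMax f g x := by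
        rw [volume_cube, ← ENNReal.ofReal_pow (by positivity), ← ENNReal.ofReal_pow (by positivity),
          ← mul_assoc, ← ENNReal.ofReal_mul hKρ, mul_assoc K, h_vol, mul_assoc]

theorem annuli_splitting_bound_general (n : ℕ) (γ : ℝ) (hγ : 0 < γ) :
    ∃ C : ℝ, 0 < C ∧ ∀ (x : En n) (η h₀ : ℝ), 0 < η → 0 < h₀ → h₀ ≤ η/4 →
      ∀ f g : En n → ℝ, LocallyIntegrable f volume → LocallyIntegrable g volume →
      (∫⁻ q in {q : En n × En n | η/4 < ‖x - q.1‖ + ‖x - q.2‖},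
          ENNReal.ofReal (h₀ ^ γ * (‖x - q.1‖ + ‖x - q.2‖) ^ (-(2*(n:ℝ) + γ)) *
            |f q.1| * |g q.2|)) ≤
        ENNReal.ofReal (C * h₀ ^ γ * η ^ (-γ)) * biMax f g x := by
  have h_ratio : 0 < 1 - (2 : ℝ) ^ (-γ) :=
    sub_pos.2 (Real.rpow_lt_one_of_one_lt_of_neg one_lt_two (neg_neg_of_pos hγ))
  refine ⟨16 ^ n * 4 ^ γ * (1 - 2 ^ (-γ))⁻¹, by positivity, ?_⟩
  intro x η h₀ hη hh₀ _ f g hf hg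
  set s : En n × En n → ℝ := fun q => ‖x - q.1‖ + ‖x - q.2‖
  set A : ℕ → Set (En n × En n) := fun j =>
    {q | s q ∈ Ico (η / 4 * 2 ^ j) (2 * (η / 4 * 2 ^ j))}
  have h_cover : {q | η / 4 < s q} ⊆ ⋃ j, A j := fun q hq => by
    simpa [A] using
      Ici_subset_iUnion_Ico_mul_pow (by positivity) one_lt_two (mem_Ici.2 (le_of_lt hq))
  have h_sum := (hasSum_mul_pow_rpow_neg (a := η / 4) (by positivity) one_lt_two hγ).mul_left
    (h₀ ^ γ * 16 ^ n)
  calc _ ≤ ∫⁻ q in ⋃ j, A j, ENNReal.ofReal (h₀ ^ γ * s q ^ (-(2 * (n : ℝ) + γ)) *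
          |f q.1| * |g q.2|) := lintegral_mono_set h_cover
    _ ≤ ∑' j, ∫⁻ q in A j, ENNReal.ofReal (h₀ ^ γ * s q ^ (-(2 * (n : ℝ) + γ)) *
          |f q.1| * |g q.2|) := lintegral_iUnion_le _ _
    _ ≤ ∑' j : ℕ, ENNReal.ofReal (h₀ ^ γ * 16 ^ n * (η / 4 * 2 ^ j) ^ (-γ)) * biMax f g x :=
        ENNReal.tsum_le_tsum fun j => setLIntegral_annulus_le hf.aestronglyMeasurable.aemeasurable
          hg.aestronglyMeasurable.aemeasurable x (by positivity) (by positivity) (by positivity)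
    _ = ENNReal.ofReal (h₀ ^ γ * 16 ^ n * ((η / 4) ^ (-γ) * (1 - 2 ^ (-γ))⁻¹)) * biMax f g x := by
        rw [ENNReal.tsum_mul_right, ← ENNReal.ofReal_tsum_of_nonneg (fun _ => by positivity)
          h_sum.summable, h_sum.tsum_eq]
    _ = _ := by
        rw [Real.div_rpow hη.le zero_le_four, Real.rpow_neg zero_le_four, div_inv_eq_mul]
        ring_nf

/-- the dyadic-annuli estimate
`∬_{|x-y|+|x-z|>η/4} h₀^γ (|x-y|+|x-z|)^{-(2n+γ)} |f(y)||g(z)| dy dz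
  ≤ C h₀^γ η^{-γ} 𝓜(f,g)(x)`, with `C = C(n,γ)`. -/
theorem annuli_splitting_bound (n : ℕ) (hn : 1 ≤ n) (γ : ℝ) (hγ : 0 < γ) :
    ∃ C : ℝ, 0 < C ∧ ∀ (x : En n) (η h₀ : ℝ), 0 < η → 0 < h₀ → h₀ ≤ η/4 →
      ∀ f g : En n → ℝ, LocallyIntegrable f volume → LocallyIntegrable g volume →
      (∫⁻ q in {q : En n × En n | η/4 < ‖x - q.1‖ + ‖x - q.2‖},
          ENNReal.ofReal (h₀ ^ γ * (‖x - q.1‖ + ‖x - q.2‖) ^ (-(2*(n:ℝ) + γ)) *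
            |f q.1| * |g q.2|)) ≤
        ENNReal.ofReal (C * h₀ ^ γ * η ^ (-γ)) * biMax f g x :=
  annuli_splitting_bound_general n γ hγ

end
end

section
/- Let T* be the truncated maximal bilinear operator and T*_η its smoothly truncated version with cutoff parameter η > 0, i.e., with kernel K_η(x,y,z) = K(x,y,z)[1-φ((2/η)(|x-y|+|x-z|))] where K satisfies |K(x,y,z)| ≤ A(|x-y|+|x-z|)^{-2n}. For b_1, b_2 ∈ C_c^∞(ℝ^n), the iterated commutators satisfy the pointwise bound |T*_{(b_1,b_2)}(f,g)(x) − T*_{η,(b_1,b_2)}(f,g)(x)| ≤ C η² ‖∇b_1‖_∞ ‖∇b_2‖_∞ 𝓜(f,g)(x) for all x ∈ ℝ^n, where C depends only on n and A. -/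
open MeasureTheory Filter Set ENNReal
open scoped Topology

noncomputable section

/-- `∫ |f|^p w dx`, the `p`-th power of the `L^p(w)` norm, valued in `ℝ≥0∞`. -/
def wPowInt {n : ℕ} (p : ℝ) (w f : En n → ℝ) : ℝ≥0∞ :=
  ∫⁻ x, ENNReal.ofReal (|f x| ^ p * w x)

/-- The BMO seminorm `sup_Q |Q|⁻¹ ∫_Q |b - b_Q|`, valued in `ℝ≥0∞`. -/
def bmoSeminorm {n : ℕ} (b : En n → ℝ) : ℝ≥0∞ :=
  ⨆ (c : En n) (r : ℝ) (_ : 0 < r),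
    (∫⁻ y in cube c r, ENNReal.ofReal |b y - ⨍ z in cube c r, b z|) / volume (cube c r)

/-- `b ∈ CMO(ℝ^n)`: `b` lies in the closure of `C_c^∞(ℝ^n)` in the BMO topology. -/
def InCMO {n : ℕ} (b : En n → ℝ) : Prop :=
  LocallyIntegrable b volume ∧ bmoSeminorm b < ⊤ ∧
  ∀ ε : ℝ, 0 < ε → ∃ g : En n → ℝ, ContDiff ℝ (⊤ : ℕ∞) g ∧ HasCompactSupport g ∧
    bmoSeminorm (fun x => b x - g x) ≤ ENNReal.ofReal ε

/-- The multiple Muckenhoupt class `A_{(p₁,p₂)}` of Lerner–Ombrosi–Pérez–Torres–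
Trujillo-González, where `1/p = 1/p₁ + 1/p₂` and `v = w₁^{p/p₁} w₂^{p/p₂}`:
`sup_Q (|Q|⁻¹∫_Q v)(|Q|⁻¹∫_Q w₁^{1-p₁'})^{p/p₁'}(|Q|⁻¹∫_Q w₂^{1-p₂'})^{p/p₂'} < ∞`
(note `1 - pⱼ' = -1/(pⱼ-1)` and `p/pⱼ' = p(pⱼ-1)/pⱼ`). -/
def IsMultiAp {n : ℕ} (p p₁ p₂ : ℝ) (w₁ w₂ : En n → ℝ) : Prop :=
  (∀ x, 0 ≤ w₁ x) ∧ (∀ x, 0 ≤ w₂ x) ∧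
  LocallyIntegrable w₁ volume ∧ LocallyIntegrable w₂ volume ∧
  ∃ C : ℝ, ∀ (c : En n) (r : ℝ), 0 < r →
    (⨍ y in cube c r, w₁ y ^ (p/p₁) * w₂ y ^ (p/p₂)) *
    (⨍ y in cube c r, w₁ y ^ (-(1/(p₁ - 1)))) ^ (p * (p₁ - 1) / p₁) *
    (⨍ y in cube c r, w₂ y ^ (-(1/(p₂ - 1)))) ^ (p * (p₂ - 1) / p₂) ≤ C

/-- The commutator in the first entry of the truncated maximal bilinear singular integral:
`T*_{b,1}(f,g)(x) = sup_{δ>0} |∬_{|x-y|+|x-z|>δ} K(x,y,z)(b(x)-b(y)) f(y)g(z) dy dz|`. -/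
def TstarB1 {n : ℕ} (K : En n → En n → En n → ℝ) (b f g : En n → ℝ) (x : En n) : ℝ :=
  sSup {t : ℝ | ∃ δ : ℝ, 0 < δ ∧
    t = |∫ q in {q : En n × En n | δ < ‖x - q.1‖ + ‖x - q.2‖},
          K x q.1 q.2 * (b x - b q.1) * f q.1 * g q.2|}

/-- The iterated commutator of the truncated maximal bilinear singular integral:
`T*_{(b₁,b₂)}(f,g)(x) = sup_{δ>0} |∬_{|x-y|+|x-z|>δ}
  K(x,y,z)(b₁(x)-b₁(y))(b₂(x)-b₂(z)) f(y)g(z) dy dz|`. -/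
def TstarBB {n : ℕ} (K : En n → En n → En n → ℝ) (b₁ b₂ f g : En n → ℝ) (x : En n) : ℝ :=
  sSup {t : ℝ | ∃ δ : ℝ, 0 < δ ∧
    t = |∫ q in {q : En n × En n | δ < ‖x - q.1‖ + ‖x - q.2‖},
          K x q.1 q.2 * (b₁ x - b₁ q.1) * (b₂ x - b₂ q.2) * f q.1 * g q.2|}

lemma cube_eq {n : ℕ} (c : En n) (r : ℝ) :
    cube c r = (MeasurableEquiv.toLp 2 (Fin n → ℝ)).symm ⁻¹'
      (univ.pi fun i => Icc (c i - r) (c i + r)) := by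
  ext y
  simp only [cube, mem_setOf_eq, mem_preimage, MeasurableEquiv.coe_toLp_symm,
    Set.mem_univ_pi, mem_Icc]
  constructor
  · intro h i
    have h1 := (abs_sub_le_iff.mp (h i)).1
    have h2 := (abs_sub_le_iff.mp (h i)).2
    constructor <;> [skip; skip] <;>
      · show _ ≤ _
        linarith
  · intro h i
    have h1 := (h i).1
    have h2 := (h i).2
    rw [abs_sub_le_iff]; constructor <;> linarith

lemma cube_volume {n : ℕ} (c : En n) (r : ℝ) :
    volume (cube c r) = ENNReal.ofReal (2*r) ^ n := by
  rw [cube_eq, (EuclideanSpace.volume_preserving_symm_measurableEquiv_toLp (Fin n)).measure_preimage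
    (by measurability)]
  rw [volume_pi_pi]
  simp only [Real.volume_Icc]
  have : ∀ x : Fin n, ENNReal.ofReal (c x + r - (c x - r)) = ENNReal.ofReal (2*r) := by
    intro x; congr 1; ring
  simp only [this, Finset.prod_const, Finset.card_univ, Fintype.card_fin]

lemma cube_measurable {n : ℕ} (c : En n) (r : ℝ) : MeasurableSet (cube c r) := by
  rw [cube_eq]; exact (MeasurableEquiv.toLp 2 (Fin n → ℝ)).symm.measurable (by measurability)

lemma abs_coord_le_norm {n : ℕ} (v : En n) (i : Fin n) : |v i| ≤ ‖v‖ := by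
  rw [EuclideanSpace.norm_eq, ← Real.sqrt_sq_eq_abs]
  apply Real.sqrt_le_sqrt
  calc v i ^ 2 = ‖v i‖ ^ 2 := by rw [Real.norm_eq_abs, sq_abs]
  _ ≤ ∑ j, ‖v j‖ ^ 2 := Finset.single_le_sum (f := fun j => ‖v j‖ ^ 2)
      (fun j _ => sq_nonneg _) (Finset.mem_univ i)

lemma mem_cube_of_norm_le {n : ℕ} {x y : En n} {r : ℝ} (h : ‖x - y‖ ≤ r) : y ∈ cube x r := by
  intro i
  have h2 := abs_coord_le_norm (x - y) i
  have h3 : (x - y) i = x i - y i := rfl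
  rw [h3] at h2
  rw [abs_sub_comm]
  linarith

lemma mem_cube_self {n : ℕ} (x : En n) {r : ℝ} (hr : 0 < r) : x ∈ cube x r := by
  intro i; simpa using hr.le

lemma lintegral_cube_mul_le {n : ℕ} (f g : En n → ℝ) (x : En n) {r : ℝ} (hr : 0 < r) :
    (∫⁻ y in cube x r, ENNReal.ofReal |f y|) * (∫⁻ z in cube x r, ENNReal.ofReal |g z|) ≤
      ENNReal.ofReal (2*r) ^ (2*n) * biMax f g x := by
  set V := volume (cube x r) with hV
  have hVval : V = ENNReal.ofReal (2*r) ^ n := cube_volume x r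
  have hV0 : V ≠ 0 := by
    rw [hVval]; positivity
  have hVtop : V ≠ ⊤ := by rw [hVval]; exact (pow_ne_top ofReal_ne_top)
  set a := ∫⁻ y in cube x r, ENNReal.ofReal |f y|
  set b := ∫⁻ z in cube x r, ENNReal.ofReal |g z|
  have hbi : (a / V) * (b / V) ≤ biMax f g x := by
    apply le_iSup_of_le x
    apply le_iSup_of_le r
    apply le_iSup_of_le hr
    exact le_iSup_of_le (mem_cube_self x hr) le_rfl
  calc a * b = (V * (a / V)) * (V * (b / V)) := by
        rw [ENNReal.mul_div_cancel hV0 hVtop, ENNReal.mul_div_cancel hV0 hVtop]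
  _ = (V * V) * ((a/V) * (b/V)) := by ring
  _ ≤ (V * V) * biMax f g x := by exact mul_le_mul_right hbi _
  _ = ENNReal.ofReal (2*r) ^ (2*n) * biMax f g x := by
        rw [hVval, ← pow_add]; congr 2; ring

lemma sSup_comparison {u v : ℝ → ℝ} {M : ℝ} (hM : 0 ≤ M)
    (h₁ : ∀ δ : ℝ, 0 < δ → ∃ δ' : ℝ, 0 < δ' ∧ u δ ≤ v δ' + M)
    (h₂ : ∀ δ : ℝ, 0 < δ → ∃ δ' : ℝ, 0 < δ' ∧ v δ ≤ u δ' + M) :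
    |sSup {t | ∃ δ : ℝ, 0 < δ ∧ t = u δ} - sSup {t | ∃ δ : ℝ, 0 < δ ∧ t = v δ}| ≤ M := by
  set S₁ := {t | ∃ δ : ℝ, 0 < δ ∧ t = u δ}
  set S₂ := {t | ∃ δ : ℝ, 0 < δ ∧ t = v δ}
  have hne₁ : S₁.Nonempty := ⟨u 1, 1, one_pos, rfl⟩
  have hne₂ : S₂.Nonempty := ⟨v 1, 1, one_pos, rfl⟩
  have key : ∀ (S T : Set ℝ) (p q : ℝ → ℝ),
      S = {t | ∃ δ : ℝ, 0 < δ ∧ t = p δ} → T = {t | ∃ δ : ℝ, 0 < δ ∧ t = q δ} →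
      (∀ δ : ℝ, 0 < δ → ∃ δ' : ℝ, 0 < δ' ∧ p δ ≤ q δ' + M) →
      BddAbove T → sSup S ≤ sSup T + M := by
    intro S T p q hS hT h hbdd
    apply csSup_le (by rw [hS]; exact ⟨p 1, 1, one_pos, rfl⟩)
    rintro t ht
    rw [hS] at ht
    obtain ⟨δ, hδ, rfl⟩ := ht
    obtain ⟨δ', hδ', hle⟩ := h δ hδ
    have : q δ' ≤ sSup T := le_csSup hbdd (by rw [hT]; exact ⟨δ', hδ', rfl⟩)
    linarith
  have keybdd : ∀ (S T : Set ℝ) (p q : ℝ → ℝ),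
      S = {t | ∃ δ : ℝ, 0 < δ ∧ t = p δ} → T = {t | ∃ δ : ℝ, 0 < δ ∧ t = q δ} →
      (∀ δ : ℝ, 0 < δ → ∃ δ' : ℝ, 0 < δ' ∧ p δ ≤ q δ' + M) →
      BddAbove T → BddAbove S := by
    intro S T p q hS hT h hbdd
    obtain ⟨B, hB⟩ := hbdd
    refine ⟨B + M, ?_⟩
    rintro t ht
    rw [hS] at ht
    obtain ⟨δ, hδ, rfl⟩ := ht
    obtain ⟨δ', hδ', hle⟩ := h δ hδ
    have : q δ' ≤ B := hB (by rw [hT]; exact ⟨δ', hδ', rfl⟩)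
    linarith
  by_cases hb₂ : BddAbove S₂
  · have hb₁ : BddAbove S₁ := keybdd S₁ S₂ u v rfl rfl h₁ hb₂
    have l1 := key S₁ S₂ u v rfl rfl h₁ hb₂
    have l2 := key S₂ S₁ v u rfl rfl h₂ hb₁
    rw [abs_sub_le_iff]; constructor <;> linarith
  · have hb₁ : ¬ BddAbove S₁ := by
      intro hb₁
      exact hb₂ (keybdd S₂ S₁ v u rfl rfl h₂ hb₁)
    rw [Real.sSup_of_not_bddAbove hb₁, Real.sSup_of_not_bddAbove hb₂]
    simpa using hM

lemma En.nontrivial' {n : ℕ} (hn : 1 ≤ n) : Nontrivial (En n) := by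
  have : 0 < n := hn
  refine ⟨⟨EuclideanSpace.single ⟨0, this⟩ 1, 0, ?_⟩⟩
  intro h
  have := congrFun (congrArg (fun v : En n => (v : Fin n → ℝ)) h) ⟨0, this⟩
  simp [EuclideanSpace.single] at this

lemma s_continuous {n : ℕ} (x : En n) :
    Continuous (fun q : En n × En n => ‖x - q.1‖ + ‖x - q.2‖) := by
  fun_prop

lemma sphere_slice_null {n : ℕ} (hn : 1 ≤ n) (x : En n) (η : ℝ) :
    volume {q : En n × En n | ‖x - q.1‖ + ‖x - q.2‖ = η} = 0 := by
  haveI := En.nontrivial' hn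
  have hmeas : MeasurableSet {q : En n × En n | ‖x - q.1‖ + ‖x - q.2‖ = η} :=
    measurableSet_eq_fun (s_continuous x).measurable measurable_const
  rw [Measure.volume_eq_prod, Measure.prod_apply hmeas]
  have : ∀ y : En n, volume (Prod.mk y ⁻¹' {q : En n × En n | ‖x - q.1‖ + ‖x - q.2‖ = η}) = 0 := by
    intro y
    have hset : (Prod.mk y ⁻¹' {q : En n × En n | ‖x - q.1‖ + ‖x - q.2‖ = η}) =
        Metric.sphere x (η - ‖x - y‖) := by
      ext z
      simp only [mem_preimage, mem_setOf_eq, Metric.mem_sphere, dist_eq_norm]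
      have hzx : ‖z - x‖ = ‖x - z‖ := norm_sub_rev z x
      constructor <;> intro h <;> linarith
    rw [hset, Measure.addHaar_sphere]
  rw [lintegral_congr this, lintegral_zero]

lemma dyadic_cover {η s : ℝ} (hη : 0 < η) (hs : 0 < s) (hsη : s < η) :
    ∃ k : ℕ, η / 2^(k+1) < s ∧ s ≤ η / 2^k := by
  have h1 : 1 < η / s := (one_lt_div hs).mpr hsη
  obtain ⟨m, hm⟩ := pow_unbounded_of_one_lt (η / s) (by norm_num : (1:ℝ) < 2)
  have hex : ∃ m : ℕ, η / s < 2^m := ⟨m, hm⟩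
  classical
  set m₀ := Nat.find hex with hm₀
  have hm₀spec : η / s < 2^m₀ := Nat.find_spec hex
  have hm₀pos : 0 < m₀ := by
    rcases Nat.eq_zero_or_pos m₀ with h | h
    · exfalso; rw [h] at hm₀spec; simp at hm₀spec; linarith
    · exact h
  have hlow : ¬ (η / s < 2^(m₀ - 1)) := Nat.find_min hex (by omega)
  push_neg at hlow
  refine ⟨m₀ - 1, ?_, ?_⟩
  · have : m₀ - 1 + 1 = m₀ := by omega
    rw [this]
    rw [div_lt_iff₀ (by positivity)]
    rw [div_lt_iff₀ hs] at hm₀spec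
    linarith [hm₀spec]
  · rw [le_div_iff₀ (by positivity)]
    rw [le_div_iff₀ hs] at hlow
    linarith [hlow]

lemma key_lintegral {n : ℕ} (hn : 1 ≤ n) {A N₁ N₂ η : ℝ} (hA : 0 < A)
    (hN₁ : 0 ≤ N₁) (hN₂ : 0 ≤ N₂) (hη : 0 < η)
    (f g : En n → ℝ) (hf : LocallyIntegrable f volume) (hg : LocallyIntegrable g volume)
    (x : En n) (F : En n × En n → ℝ)
    (hb : ∀ q : En n × En n, ‖x - q.1‖ + ‖x - q.2‖ < η → q ≠ (x,x) →
      |F q| ≤ A*N₁*N₂*(‖x-q.1‖+‖x-q.2‖)^((2:ℝ)-2*n)*(|f q.1| * |g q.2|))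
    (h0 : ∀ q : En n × En n, η ≤ ‖x - q.1‖ + ‖x - q.2‖ → F q = 0) :
    ∫⁻ q, ENNReal.ofReal |F q| ≤
      ENNReal.ofReal ((2*A*4^(2*n)) * η^2 * N₁ * N₂) * biMax f g x := by
  haveI := En.nontrivial' hn
  set s : En n × En n → ℝ := fun q => ‖x - q.1‖ + ‖x - q.2‖ with hsdef
  have hscont : Continuous s := by fun_prop
  have hs_nonneg : ∀ q, 0 ≤ s q := fun q => by positivity
  have hs_zero : ∀ q, s q = 0 → q = (x, x) := by
    intro q hq
    have h1 : ‖x - q.1‖ = 0 := by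
      have := norm_nonneg (x - q.1); have := norm_nonneg (x - q.2); simp only [hsdef] at hq; linarith
    have h2 : ‖x - q.2‖ = 0 := by
      have := norm_nonneg (x - q.1); simp only [hsdef] at hq; linarith
    have e1 : q.1 = x := by
      have := norm_eq_zero.mp h1; have : x - q.1 = 0 := norm_eq_zero.mp h1; 
      have := sub_eq_zero.mp this; exact this.symm
    have e2 : q.2 = x := by
      have : x - q.2 = 0 := norm_eq_zero.mp h2
      exact (sub_eq_zero.mp this).symm
    exact Prod.ext e1 e2
  set Ak : ℕ → Set (En n × En n) := fun k => {q | η / 2^(k+1) < s q ∧ s q ≤ η / 2^k} with hAk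
  have hAkm : ∀ k, MeasurableSet (Ak k) := by
    intro k
    exact ((isOpen_lt continuous_const hscont).measurableSet.inter
      (isClosed_le hscont continuous_const).measurableSet)
  set U : Set (En n × En n) := ⋃ k, Ak k with hU
  have hUm : MeasurableSet U := MeasurableSet.iUnion hAkm
  set P := biMax f g x with hP
  -- split
  have hsplit : ∫⁻ q, ENNReal.ofReal |F q| =
      (∫⁻ q in U, ENNReal.ofReal |F q|) + ∫⁻ q in Uᶜ, ENNReal.ofReal |F q| :=
    (lintegral_add_compl _ hUm).symm
  -- complement part is zero
  have hsingle : volume ({((x,x) : En n × En n)} : Set _) = 0 := by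
    rw [← Set.singleton_prod_singleton, Measure.volume_eq_prod, Measure.prod_prod,
      measure_singleton]
    simp
  have hcompl : ∫⁻ q in Uᶜ, ENNReal.ofReal |F q| = 0 := by
    rw [← le_zero_iff]
    have hpt : ∀ q ∈ Uᶜ, ENNReal.ofReal |F q| ≤
        ({((x,x) : En n × En n)} : Set _).indicator (fun _ => (⊤:ℝ≥0∞)) q := by
      intro q hq
      by_cases hqx : q = (x, x)
      · rw [indicator_of_mem (by simp [hqx])]; exact le_top
      · have hFq : F q = 0 := by
          rcases le_or_gt η (s q) with h | h
          · exact h0 q h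
          · have hspos : 0 < s q := by
              rcases lt_or_eq_of_le (hs_nonneg q) with h' | h'
              · exact h'
              · exact absurd (hs_zero q h'.symm) hqx
            obtain ⟨k, hk1, hk2⟩ := dyadic_cover hη hspos h
            exact absurd (mem_iUnion.mpr ⟨k, show q ∈ Ak k from ⟨hk1, hk2⟩⟩ : q ∈ U) hq
        simp [hFq]
    calc ∫⁻ q in Uᶜ, ENNReal.ofReal |F q|
        ≤ ∫⁻ q in Uᶜ, ({((x,x) : En n × En n)} : Set _).indicator (fun _ => (⊤:ℝ≥0∞)) q :=
          setLIntegral_mono' hUm.compl hpt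
      _ ≤ ∫⁻ q, ({((x,x) : En n × En n)} : Set _).indicator (fun _ => (⊤:ℝ≥0∞)) q :=
          lintegral_mono_set (subset_univ _) |>.trans (by rw [Measure.restrict_univ])
      _ = ⊤ * volume ({((x,x) : En n × En n)} : Set _) := by
          rw [lintegral_indicator (measurableSet_singleton _)]
          simp [setLIntegral_const]
      _ = 0 := by
          rw [hsingle]; simp
  rw [hsplit, hcompl, add_zero]
  set c₀ := A*N₁*N₂*η^2*4^(2*n) with hc₀
  have hc₀nonneg : 0 ≤ c₀ := by positivity
  have hfm : AEMeasurable (fun y => ENNReal.ofReal |f y|) (volume : Measure (En n)) :=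
    ENNReal.measurable_ofReal.comp_aemeasurable (hf.aestronglyMeasurable.norm.aemeasurable.congr (Filter.Eventually.of_forall (fun y => (Real.norm_eq_abs _))))
  have hgm : AEMeasurable (fun y => ENNReal.ofReal |g y|) (volume : Measure (En n)) :=
    ENNReal.measurable_ofReal.comp_aemeasurable (hg.aestronglyMeasurable.norm.aemeasurable.congr (Filter.Eventually.of_forall (fun y => (Real.norm_eq_abs _))))
  have hterm : ∀ k : ℕ, ∫⁻ q in Ak k, ENNReal.ofReal |F q| ≤
      (ENNReal.ofReal c₀ * P) * ENNReal.ofReal (1/4) ^ (k+1) := by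
    intro k
    set b : ℝ := η / 2^(k+1) with hbdef
    have hbpos : 0 < b := by positivity
    set ck : ℝ := A*N₁*N₂* b ^ ((2:ℝ)-2*(n:ℝ)) with hck
    have hcknn : 0 ≤ ck := by positivity
    have hpt : ∀ q ∈ Ak k, ENNReal.ofReal |F q| ≤
        ENNReal.ofReal ck * ENNReal.ofReal (|f q.1| * |g q.2|) := by
      intro q hq
      obtain ⟨hq1, hq2⟩ := hq
      rcases le_or_gt η (s q) with h | h
      · rw [h0 q h]; simp
      · have hqx : q ≠ (x,x) := by
          intro hc
          have h00 : s q = 0 := by rw [hc]; simp [hsdef]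
          rw [h00] at hq1; linarith
        have hbb := hb q h hqx
        have hmono : (s q) ^ ((2:ℝ)-2*(n:ℝ)) ≤ b ^ ((2:ℝ)-2*(n:ℝ)) := by
          apply Real.rpow_le_rpow_of_nonpos hbpos hq1.le
          have hcast : (1:ℝ) ≤ (n:ℝ) := by exact_mod_cast hn
          linarith
        have hFle : |F q| ≤ ck * (|f q.1| * |g q.2|) := by
          calc |F q| ≤ A*N₁*N₂*(s q)^((2:ℝ)-2*(n:ℝ))*(|f q.1| * |g q.2|) := hbb
          _ ≤ A*N₁*N₂*b^((2:ℝ)-2*(n:ℝ))*(|f q.1| * |g q.2|) := by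
              apply mul_le_mul_of_nonneg_right _ (by positivity)
              exact mul_le_mul_of_nonneg_left hmono (by positivity)
          _ = ck * (|f q.1| * |g q.2|) := rfl
        calc ENNReal.ofReal |F q| ≤ ENNReal.ofReal (ck * (|f q.1| * |g q.2|)) :=
              ENNReal.ofReal_le_ofReal hFle
        _ = ENNReal.ofReal ck * ENNReal.ofReal (|f q.1| * |g q.2|) :=
              ENNReal.ofReal_mul hcknn
    have step1 : ∫⁻ q in Ak k, ENNReal.ofReal |F q| ≤
        ENNReal.ofReal ck * ∫⁻ q in Ak k, ENNReal.ofReal (|f q.1| * |g q.2|) := by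
      calc ∫⁻ q in Ak k, ENNReal.ofReal |F q|
          ≤ ∫⁻ q in Ak k, ENNReal.ofReal ck * ENNReal.ofReal (|f q.1| * |g q.2|) :=
            setLIntegral_mono' (hAkm k) hpt
        _ = _ := lintegral_const_mul' _ _ ENNReal.ofReal_ne_top
    set r : ℝ := η / 2^k with hrdef
    have hrpos : 0 < r := by positivity
    have hsub : Ak k ⊆ (cube x r) ×ˢ (cube x r) := by
      rintro q ⟨hq1, hq2⟩
      have hn1 := norm_nonneg (x - q.1)
      have hn2 := norm_nonneg (x - q.2)
      have hsq : ‖x - q.1‖ + ‖x - q.2‖ ≤ r := hq2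
      exact ⟨mem_cube_of_norm_le (by linarith), mem_cube_of_norm_le (by linarith)⟩
    have step2 : ∫⁻ q in Ak k, ENNReal.ofReal (|f q.1| * |g q.2|) ≤
        (∫⁻ y in cube x r, ENNReal.ofReal |f y|) * (∫⁻ z in cube x r, ENNReal.ofReal |g z|) := by
      calc ∫⁻ q in Ak k, ENNReal.ofReal (|f q.1| * |g q.2|)
          ≤ ∫⁻ q in (cube x r) ×ˢ (cube x r), ENNReal.ofReal (|f q.1| * |g q.2|) :=
            lintegral_mono_set hsub
        _ = ∫⁻ q in (cube x r) ×ˢ (cube x r), ENNReal.ofReal |f q.1| * ENNReal.ofReal |g q.2| := by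
            apply lintegral_congr; intro q; rw [ENNReal.ofReal_mul (abs_nonneg _)]
        _ = _ := by
            rw [Measure.volume_eq_prod, ← Measure.prod_restrict]
            exact lintegral_prod_mul hfm.restrict hgm.restrict
    have step3 := lintegral_cube_mul_le f g x hrpos
    have hreal : ck * (2*r)^(2*n) = c₀ * (1/4)^(k+1) := by
      have he : b ^ ((2:ℝ)-2*(n:ℝ)) = b^(2:ℕ) / b^(2*n:ℕ) := by
        rw [Real.rpow_sub hbpos]
        congr 1
        · rw [← Real.rpow_natCast b 2]; norm_num
        · rw [← Real.rpow_natCast b (2*n)]; congr 1; push_cast; ring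
      have h2r : 2*r = 4*b := by
        rw [hrdef, hbdef]; field_simp; ring
      have hbne : b ^ (2*n) ≠ 0 := by positivity
      rw [hck, he, h2r, hc₀]
      rw [mul_pow 4 b (2*n)]
      field_simp
      rw [hbdef]
      have h4 : ((4:ℝ))^(k+1) = ((2:ℝ)^(k+1))^2 := by
        rw [show (4:ℝ) = 2^2 by norm_num, ← pow_mul, ← pow_mul, Nat.mul_comm]
      field_simp [h4]
      rw [← h4, mul_assoc, ← mul_pow]; norm_num
    calc ∫⁻ q in Ak k, ENNReal.ofReal |F q|
        ≤ ENNReal.ofReal ck * ((∫⁻ y in cube x r, ENNReal.ofReal |f y|) *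
            (∫⁻ z in cube x r, ENNReal.ofReal |g z|)) := by
          exact step1.trans (mul_le_mul_right step2 _)
      _ ≤ ENNReal.ofReal ck * (ENNReal.ofReal (2*r) ^ (2*n) * P) :=
          mul_le_mul_right step3 _
      _ = (ENNReal.ofReal ck * ENNReal.ofReal ((2*r)^(2*n))) * P := by
          rw [ENNReal.ofReal_pow (by positivity)]; ring
      _ = ENNReal.ofReal (ck * (2*r)^(2*n)) * P := by
          rw [ENNReal.ofReal_mul hcknn]
      _ = ENNReal.ofReal (c₀ * (1/4)^(k+1)) * P := by rw [hreal]
      _ = (ENNReal.ofReal c₀ * P) * ENNReal.ofReal (1/4) ^ (k+1) := by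
          rw [ENNReal.ofReal_mul hc₀nonneg, ENNReal.ofReal_pow (by norm_num)]
          ring
  have hq14 : ENNReal.ofReal (1/4) * (1 - ENNReal.ofReal (1/4))⁻¹ ≤ 1 := by
    have h34 : (1:ℝ≥0∞) - ENNReal.ofReal (1/4) = ENNReal.ofReal (3/4) := by
      rw [← ENNReal.ofReal_one, ← ENNReal.ofReal_sub _ (by norm_num : (0:ℝ) ≤ 1/4)]
      norm_num
    rw [h34]
    calc ENNReal.ofReal (1/4) * (ENNReal.ofReal (3/4))⁻¹
        ≤ ENNReal.ofReal (3/4) * (ENNReal.ofReal (3/4))⁻¹ :=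
          mul_le_mul_left (ENNReal.ofReal_le_ofReal (by norm_num)) _
      _ = 1 := ENNReal.mul_inv_cancel (by positivity) ENNReal.ofReal_ne_top
  calc ∫⁻ q in U, ENNReal.ofReal |F q|
      ≤ ∑' k, ∫⁻ q in Ak k, ENNReal.ofReal |F q| := lintegral_iUnion_le _ _
    _ ≤ ∑' k, (ENNReal.ofReal c₀ * P) * ENNReal.ofReal (1/4) ^ (k+1) :=
        ENNReal.tsum_le_tsum hterm
    _ = (ENNReal.ofReal c₀ * P) * ∑' k, ENNReal.ofReal (1/4) ^ (k+1) :=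
        ENNReal.tsum_mul_left
    _ = (ENNReal.ofReal c₀ * P) * (ENNReal.ofReal (1/4) * ∑' k, ENNReal.ofReal (1/4) ^ k) := by
        congr 1
        rw [← ENNReal.tsum_mul_left]
        congr 1; funext k; rw [pow_succ]; ring
    _ = (ENNReal.ofReal c₀ * P) * (ENNReal.ofReal (1/4) * (1 - ENNReal.ofReal (1/4))⁻¹) := by
        rw [ENNReal.tsum_geometric]
    _ ≤ (ENNReal.ofReal c₀ * P) * 1 := mul_le_mul_right hq14 _
    _ = ENNReal.ofReal c₀ * P := mul_one _
    _ ≤ ENNReal.ofReal ((2*A*4^(2*n)) * η^2 * N₁ * N₂) * P := by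
        apply mul_le_mul_left
        apply ENNReal.ofReal_le_ofReal
        rw [hc₀]; nlinarith [hc₀nonneg]

/-- pointwise comparison of the iterated commutator of the sharply
truncated and the smoothly truncated maximal bilinear operators:
`|T*_{(b₁,b₂)}(f,g)(x) − T*_{η,(b₁,b₂)}(f,g)(x)| ≤ C η² ‖∇b₁‖_∞ ‖∇b₂‖_∞ 𝓜(f,g)(x)`,
with `C = C(n,A)`. -/
theorem smooth_truncation_iterated_difference (n : ℕ) (hn : 1 ≤ n) (A : ℝ) (hA : 0 < A)
    (K : En n → En n → En n → ℝ)
    (hK : ∀ x y z : En n, (y, z) ≠ (x, x) →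
      |K x y z| ≤ A * (‖x - y‖ + ‖x - z‖) ^ (-(2 * (n:ℝ)))) :
    ∃ C : ℝ, 0 < C ∧
      ∀ (φ : ℝ → ℝ), ContDiffOn ℝ (⊤ : ℕ∞) φ (Ici 0) → (∀ t, 0 ≤ t → 0 ≤ φ t ∧ φ t ≤ 1) →
        (∀ t ∈ Icc (0:ℝ) 1, φ t = 1) → (∀ t, 2 ≤ t → φ t = 0) →
      ∀ (η : ℝ), 0 < η →
      ∀ (b₁ b₂ : En n → ℝ), ContDiff ℝ (⊤ : ℕ∞) b₁ → HasCompactSupport b₁ →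
        ContDiff ℝ (⊤ : ℕ∞) b₂ → HasCompactSupport b₂ →
      ∀ (N₁ N₂ : ℝ), (∀ x, ‖fderiv ℝ b₁ x‖ ≤ N₁) → (∀ x, ‖fderiv ℝ b₂ x‖ ≤ N₂) →
      ∀ (f g : En n → ℝ), LocallyIntegrable f volume → LocallyIntegrable g volume →
      ∀ x : En n,
        ENNReal.ofReal |TstarBB K b₁ b₂ f g x -
            TstarBB (fun x y z =>
              K x y z * (1 - φ (2/η * (‖x - y‖ + ‖x - z‖)))) b₁ b₂ f g x| ≤
          ENNReal.ofReal (C * η^2 * N₁ * N₂) * biMax f g x := by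
  refine ⟨2*A*4^(2*n), by positivity, ?_⟩
  intro φ hφs hφ01 hφ1 hφ2 η hη b₁ b₂ hb₁ hb₁c hb₂ hb₂c N₁ N₂ hN₁ hN₂ f g hf hg x
  set C := 2*A*4^(2*n) with hC
  set RHS := ENNReal.ofReal (C * η^2 * N₁ * N₂) * biMax f g x with hRHS
  by_cases htop : RHS = ⊤
  · rw [htop]; exact le_top
  have hN₁0 : 0 ≤ N₁ := le_trans (norm_nonneg _) (hN₁ x)
  have hN₂0 : 0 ≤ N₂ := le_trans (norm_nonneg _) (hN₂ x)
  set M := RHS.toReal with hM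
  have hM0 : 0 ≤ M := ENNReal.toReal_nonneg
  set s : En n × En n → ℝ := fun q => ‖x - q.1‖ + ‖x - q.2‖ with hsdef
  have hscont : Continuous s := by fun_prop
  have hs_nonneg : ∀ q, 0 ≤ s q := fun q => by positivity
  set Ks : En n × En n → ℝ := fun q =>
    K x q.1 q.2 * (b₁ x - b₁ q.1) * (b₂ x - b₂ q.2) * f q.1 * g q.2 with hKs
  set φc : En n × En n → ℝ := fun q => φ (2/η * s q) with hφc
  set Eη : En n × En n → ℝ := fun q =>
    K x q.1 q.2 * (1 - φc q) * (b₁ x - b₁ q.1) * (b₂ x - b₂ q.2) * f q.1 * g q.2 with hEη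
  set R : ℝ → Set (En n × En n) := fun δ => {q | δ < s q} with hRdef
  have hRmeas : ∀ δ, MeasurableSet (R δ) :=
    fun δ => (isOpen_lt continuous_const hscont).measurableSet
  -- φc properties
  have hφc_cont : Continuous φc := by
    apply hφs.continuousOn.comp_continuous (by fun_prop)
    intro q
    have := hs_nonneg q
    have h2η : 0 ≤ 2/η := by positivity
    exact mem_Ici.mpr (by positivity)
  have hφc_mem : ∀ q, 0 ≤ φc q ∧ φc q ≤ 1 := by
    intro q
    apply hφ01
    have := hs_nonneg q
    positivity
  have hφc0 : ∀ q, η ≤ s q → φc q = 0 := by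
    intro q hq
    apply hφ2
    have h1 : 2/η * η ≤ 2/η * s q := mul_le_mul_of_nonneg_left hq (by positivity)
    have h2 : 2/η * η = 2 := by field_simp
    linarith
  -- MVT
  have hMVT : ∀ (b : En n → ℝ) (N : ℝ), ContDiff ℝ (⊤ : ℕ∞) b → (∀ p, ‖fderiv ℝ b p‖ ≤ N) →
      ∀ y : En n, |b x - b y| ≤ N * ‖x - y‖ := by
    intro b N hb hN y
    have := Convex.norm_image_sub_le_of_norm_fderiv_le
      (fun p _ => (hb.differentiable (by simp)).differentiableAt)
      (fun p _ => hN p) convex_univ (mem_univ y) (mem_univ x)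
    rw [← Real.norm_eq_abs]
    exact this
  -- core kernel bound
  have hcore : ∀ q : En n × En n, q ≠ (x,x) →
      |Ks q| ≤ A*N₁*N₂*(s q)^((2:ℝ)-2*(n:ℝ))*(|f q.1| * |g q.2|) := by
    intro q hq
    have hqne : (q.1, q.2) ≠ (x, x) := by
      intro h; exact hq (by rw [← h])
    have hKb := hK x q.1 q.2 hqne
    have hb₁b := hMVT b₁ N₁ hb₁ hN₁ q.1
    have hb₂b := hMVT b₂ N₂ hb₂ hN₂ q.2
    have hs1 : ‖x - q.1‖ ≤ s q := by
      have := norm_nonneg (x - q.2); simp only [hsdef]; linarith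
    have hs2 : ‖x - q.2‖ ≤ s q := by
      have := norm_nonneg (x - q.1); simp only [hsdef]; linarith
    have hspos : 0 < s q := by
      rcases lt_or_eq_of_le (hs_nonneg q) with h | h
      · exact h
      · exfalso
        apply hq
        have h1 : ‖x - q.1‖ = 0 := by
          have := norm_nonneg (x - q.1); have := norm_nonneg (x - q.2)
          simp only [hsdef] at h; linarith
        have h2 : ‖x - q.2‖ = 0 := by
          have := norm_nonneg (x - q.1); simp only [hsdef] at h; linarith
        have e1 : q.1 = x := (sub_eq_zero.mp (norm_eq_zero.mp h1)).symm
        have e2 : q.2 = x := (sub_eq_zero.mp (norm_eq_zero.mp h2)).symm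
        exact Prod.ext e1 e2
    have habs : |Ks q| = |K x q.1 q.2| * |b₁ x - b₁ q.1| * |b₂ x - b₂ q.2| *
        |f q.1| * |g q.2| := by
      simp only [hKs, abs_mul]
    rw [habs]
    have hstep : |K x q.1 q.2| * |b₁ x - b₁ q.1| * |b₂ x - b₂ q.2| * |f q.1| * |g q.2| ≤
        (A * (s q) ^ (-(2 * (n:ℝ)))) * (N₁ * (s q)) * (N₂ * (s q)) * |f q.1| * |g q.2| := by
      have hK2 : |K x q.1 q.2| ≤ A * (s q) ^ (-(2 * (n:ℝ))) := hKb
      have hb1 : |b₁ x - b₁ q.1| ≤ N₁ * s q :=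
        hb₁b.trans (mul_le_mul_of_nonneg_left hs1 hN₁0)
      have hb2 : |b₂ x - b₂ q.2| ≤ N₂ * s q :=
        hb₂b.trans (mul_le_mul_of_nonneg_left hs2 hN₂0)
      have hsnn := hs_nonneg q
      have hrnn : (0:ℝ) ≤ (s q) ^ (-(2 * (n:ℝ))) := Real.rpow_nonneg hsnn _
      have m1 : |K x q.1 q.2| * |b₁ x - b₁ q.1| ≤ (A * (s q) ^ (-(2 * (n:ℝ)))) * (N₁ * s q) :=
        mul_le_mul hK2 hb1 (abs_nonneg _) (by positivity)
      have m2 : |K x q.1 q.2| * |b₁ x - b₁ q.1| * |b₂ x - b₂ q.2| ≤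
          (A * (s q) ^ (-(2 * (n:ℝ)))) * (N₁ * s q) * (N₂ * s q) :=
        mul_le_mul m1 hb2 (abs_nonneg _) (by positivity)
      have m3 := mul_le_mul_of_nonneg_right m2 (abs_nonneg (f q.1))
      exact mul_le_mul_of_nonneg_right m3 (abs_nonneg (g q.2))
    refine hstep.trans (le_of_eq ?_)
    have hrpow : (s q) ^ (-(2 * (n:ℝ))) * (s q) ^ (2:ℝ) = (s q) ^ ((2:ℝ)-2*(n:ℝ)) := by
      rw [← Real.rpow_add hspos]; ring_nf
    have hsq2 : (s q) * (s q) = (s q) ^ (2:ℝ) := by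
      rw [show ((2:ℝ)) = ((2:ℕ):ℝ) by norm_num, Real.rpow_natCast]; ring
    calc (A * (s q) ^ (-(2 * (n:ℝ)))) * (N₁ * (s q)) * (N₂ * (s q)) * |f q.1| * |g q.2|
        = A*N₁*N₂*((s q) ^ (-(2 * (n:ℝ))) * ((s q) * (s q)))*(|f q.1| * |g q.2|) := by ring
      _ = A*N₁*N₂*((s q) ^ ((2:ℝ)-2*(n:ℝ)))*(|f q.1| * |g q.2|) := by
          rw [hsq2, hrpow]
  -- master bound
  have hMbound : ∀ (F : En n × En n → ℝ), (∀ q, s q < η → q ≠ (x,x) → |F q| ≤ |Ks q|) →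
      (∀ q, η ≤ s q → F q = 0) → ∀ T : Set (En n × En n),
      (∫⁻ q in T, ENNReal.ofReal ‖F q‖).toReal ≤ M := by
    intro F h1 h2 T
    have hle : (∫⁻ q in T, ENNReal.ofReal ‖F q‖) ≤ RHS := by
      calc ∫⁻ q in T, ENNReal.ofReal ‖F q‖
          ≤ ∫⁻ q, ENNReal.ofReal ‖F q‖ :=
            (lintegral_mono_set (subset_univ T)).trans (by rw [Measure.restrict_univ])
        _ = ∫⁻ q, ENNReal.ofReal |F q| := by
            apply lintegral_congr; intro q; rw [Real.norm_eq_abs]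
        _ ≤ ENNReal.ofReal ((2*A*4^(2*n)) * η^2 * N₁ * N₂) * biMax f g x := by
            apply key_lintegral hn hA hN₁0 hN₂0 hη f g hf hg x F
            · intro q hlt hne
              exact (h1 q hlt hne).trans (hcore q hne)
            · exact h2
        _ = RHS := rfl
    exact ENNReal.toReal_mono htop hle
  -- integral abs bound
  have hIbound : ∀ (F : En n × En n → ℝ), (∀ q, s q < η → q ≠ (x,x) → |F q| ≤ |Ks q|) →
      (∀ q, η ≤ s q → F q = 0) → ∀ T : Set (En n × En n),
      |∫ q in T, F q| ≤ M := by
    intro F h1 h2 T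
    calc |∫ q in T, F q| = ‖∫ q in T, F q‖ := (Real.norm_eq_abs _).symm
      _ ≤ (∫⁻ q in T, ENNReal.ofReal ‖F q‖).toReal := norm_integral_le_lintegral_norm _
      _ ≤ M := hMbound F h1 h2 T
  -- claims
  set u : ℝ → ℝ := fun δ => |∫ q in R δ, Ks q| with hu
  set v : ℝ → ℝ := fun δ => |∫ q in R δ, Eη q| with hv
  have hDrel : ∀ q, Eη q = Ks q - φc q * Ks q := by
    intro q; simp only [hEη, hKs]; ring
  have hEabs : ∀ q, |Eη q| ≤ |Ks q| := by
    intro q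
    rw [hDrel q, show Ks q - φc q * Ks q = (1 - φc q) * Ks q by ring, abs_mul]
    have h1 : |1 - φc q| ≤ 1 := by
      rw [abs_le]; constructor <;> [linarith [(hφc_mem q).2]; linarith [(hφc_mem q).1]]
    calc |1 - φc q| * |Ks q| ≤ 1 * |Ks q| :=
          mul_le_mul_of_nonneg_right h1 (abs_nonneg _)
      _ = |Ks q| := one_mul _
  have claimA : ∀ δ : ℝ, 0 < δ → ∃ δ' : ℝ, 0 < δ' ∧ u δ ≤ v δ' + M := by
    intro δ hδ
    refine ⟨δ, hδ, ?_⟩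
    by_cases hint : IntegrableOn Ks (R δ) volume
    · have hDint : Integrable (fun q => φc q * Ks q) (volume.restrict (R δ)) :=
        Integrable.bdd_mul hint hφc_cont.aestronglyMeasurable
          (c := 1) (Filter.Eventually.of_forall fun q => by
            rw [Real.norm_eq_abs]
            exact abs_le.mpr ⟨by linarith [(hφc_mem q).1], (hφc_mem q).2⟩)
      have hsub : ∫ q in R δ, Eη q = (∫ q in R δ, Ks q) - ∫ q in R δ, φc q * Ks q := by
        rw [show Eη = fun q => Ks q - φc q * Ks q from funext hDrel]
        exact integral_sub hint hDint
      have hD : |∫ q in R δ, φc q * Ks q| ≤ M := by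
        apply hIbound
        · intro q _ _
          rw [abs_mul]
          calc |φc q| * |Ks q| ≤ 1 * |Ks q| := by
                apply mul_le_mul_of_nonneg_right _ (abs_nonneg _)
                exact abs_le.mpr ⟨by linarith [(hφc_mem q).1], (hφc_mem q).2⟩
            _ = |Ks q| := one_mul _
        · intro q hq; rw [hφc0 q hq, zero_mul]
      calc u δ = |(∫ q in R δ, Eη q) + ∫ q in R δ, φc q * Ks q| := by
            rw [hu]; dsimp only; rw [show (∫ q in R δ, Ks q) =
              (∫ q in R δ, Eη q) + ∫ q in R δ, φc q * Ks q by linarith [hsub]]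
        _ ≤ |∫ q in R δ, Eη q| + |∫ q in R δ, φc q * Ks q| := abs_add_le _ _
        _ ≤ v δ + M := add_le_add le_rfl hD
    · have h0 : u δ = 0 := by rw [hu]; dsimp only; rw [integral_undef hint]; simp
      rw [h0]
      have := abs_nonneg (∫ q in R δ, Eη q)
      have : 0 ≤ v δ := this
      linarith
  have claimB : ∀ δ : ℝ, 0 < δ → ∃ δ' : ℝ, 0 < δ' ∧ v δ ≤ u δ' + M := by
    intro δ hδ
    by_cases hEint : IntegrableOn Eη (R δ) volume
    · rcases le_or_gt η δ with hle | hlt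
      · refine ⟨δ, hδ, ?_⟩
        have heq : ∀ q ∈ R δ, Eη q = Ks q := by
          intro q hq
          have hsq : η ≤ s q := le_trans hle (le_of_lt hq)
          rw [hDrel q, hφc0 q hsq]; ring
        have hveq : v δ = u δ := by
          rw [hu, hv]; dsimp only
          rw [setIntegral_congr_fun (hRmeas δ) heq]
        rw [hveq]; linarith
      · refine ⟨η, hη, ?_⟩
        set W : Set (En n × En n) := {q | η ≤ s q} with hW
        have hWm : MeasurableSet W := (isClosed_le continuous_const hscont).measurableSet
        have hWsub : W ⊆ R δ := fun q hq => lt_of_lt_of_le hlt hq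
        have hi1 : IntegrableOn Eη W volume := hEint.mono_set hWsub
        have hi2 : IntegrableOn Eη (R δ \ W) volume := hEint.mono_set diff_subset
        have hsum : ∫ q in R δ, Eη q = (∫ q in W, Eη q) + ∫ q in R δ \ W, Eη q := by
          have h := setIntegral_union (μ := volume) (f := Eη) disjoint_sdiff_self_right
            ((hRmeas δ).diff hWm) hi1 hi2
          rw [union_diff_cancel hWsub] at h
          exact h
        have hEW : ∫ q in W, Eη q = ∫ q in W, Ks q :=
          setIntegral_congr_fun hWm (fun q hq => by rw [hDrel q, hφc0 q hq]; ring)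
        have hWae : W =ᵐ[volume] R η := by
          rw [MeasureTheory.ae_eq_set]
          constructor
          · apply measure_mono_null _ (sphere_slice_null hn x η)
            rintro q ⟨h1, h2⟩
            have h2' : ¬ (η < s q) := h2
            exact le_antisymm (not_lt.mp h2') h1
          · have hempty : R η \ W = ∅ :=
              eq_empty_iff_forall_notMem.mpr (fun q hq =>
                hq.2 (show q ∈ W from le_of_lt (show η < s q from hq.1)))
            rw [hempty]; exact measure_empty
        have hWK : ∫ q in W, Ks q = ∫ q in R η, Ks q := setIntegral_congr_set hWae
        have h2 : |∫ q in R δ \ W, Eη q| ≤ M := by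
          set F2 : En n × En n → ℝ := fun q => if s q < η then Eη q else 0 with hF2
          have hcongr : ∫ q in R δ \ W, Eη q = ∫ q in R δ \ W, F2 q := by
            apply setIntegral_congr_fun ((hRmeas δ).diff hWm)
            rintro q ⟨_, hq2⟩
            have hsq : s q < η := not_le.mp hq2
            rw [hF2]; dsimp only; rw [if_pos hsq]
          rw [hcongr]
          apply hIbound
          · intro q hlt _
            rw [hF2]; dsimp only; rw [if_pos hlt]
            exact hEabs q
          · intro q hq
            rw [hF2]; dsimp only; rw [if_neg (not_lt.mpr hq)]
        calc v δ = |(∫ q in W, Eη q) + ∫ q in R δ \ W, Eη q| := by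
              rw [hv]; dsimp only; rw [hsum]
          _ ≤ |∫ q in W, Eη q| + |∫ q in R δ \ W, Eη q| := abs_add_le _ _
          _ ≤ u η + M := by
              rw [hEW, hWK]
              exact add_le_add le_rfl h2
    · refine ⟨δ, hδ, ?_⟩
      have h0 : v δ = 0 := by rw [hv]; dsimp only; rw [integral_undef hEint]; simp
      rw [h0]
      have : 0 ≤ u δ := abs_nonneg _
      linarith
  have hfinal := sSup_comparison hM0 claimA claimB
  have hgoal : ENNReal.ofReal |sSup {t | ∃ δ : ℝ, 0 < δ ∧ t = u δ} -
      sSup {t | ∃ δ : ℝ, 0 < δ ∧ t = v δ}| ≤ RHS := by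
    calc ENNReal.ofReal |sSup {t | ∃ δ : ℝ, 0 < δ ∧ t = u δ} -
        sSup {t | ∃ δ : ℝ, 0 < δ ∧ t = v δ}| ≤ ENNReal.ofReal M :=
          ENNReal.ofReal_le_ofReal hfinal
      _ = RHS := ENNReal.ofReal_toReal htop
  exact hgoal

end
end
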